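/- Let R be an integral domain in which 2 ≠ 0, and let Rⁿ = ⊕_i W_i and Rⁿ = ⊕_j W'_j be two direct sum decompositions into free submodules, each with at least two nonzero summands. Then every element of the subgroup ∏_i GL(W_i) ⊆ GL_n(R) (automorphisms preserving every W_i) maps each W'_j into itself if and only if the decomposition ⊕_i W_i refines ⊕_j W'_j, i.e. every W_i is contained in some W'_j. -/

import Mathlib

/-!
Refinement suffices because each `W' j` is then the sum of the `W i` it contains. Conversely, fix
`i` and `j`, and let `Q = ⨆ k ≠ j, W' k`. Every automorphism of `W i`, extended by the identity on
the other summands `W k`, preserves all `W k`, hence `W' j` and `Q`. For `-1` on `W i` this forces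
`W i = (W i ⊓ W' j) ⊕ (W i ⊓ Q)`, as `2` is not a zero divisor. If both parts held nonzero vectors
`a` and `b`, a transvection `x ↦ x + f x • b` of `W i` with `f b = 0 ≠ f a` would move `a` out of
`W' j`. So `W i ≤ W' j` or `W i ≤ Q` for every `j`, and as `⨅ j, ⨆ k ≠ j, W' k = ⊥`, some `W' j`
contains `W i`.
-/

open Module Submodule

namespace Submodule

variable {R M : Type*} [Ring R] [AddCommGroup M] [Module R M] {p q : Submodule R M}

noncomputable def extendOfIsCompl (h : IsCompl p q) (e : p ≃ₗ[R] p) : M ≃ₗ[R] M :=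
  (prodEquivOfIsCompl p q h).symm ≪≫ₗ e.prodCongr (LinearEquiv.refl R q) ≪≫ₗ
    prodEquivOfIsCompl p q h

variable (h : IsCompl p q) (e : p ≃ₗ[R] p)

lemma extendOfIsCompl_apply_of_mem_left {x : M} (hx : x ∈ p) :
    extendOfIsCompl h e x = e ⟨x, hx⟩ := by
  simp [extendOfIsCompl, projectionOnto_apply_of_mem_left h hx,
    projection_apply_of_mem_right h.symm hx]

lemma extendOfIsCompl_apply_of_mem_right {x : M} (hx : x ∈ q) : extendOfIsCompl h e x = x := by
  simp [extendOfIsCompl, projectionOnto_apply_of_mem_right h hx, projection_apply_of_mem_left _ hx]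

lemma map_extendOfIsCompl_left : p.map (extendOfIsCompl h e : M →ₗ[R] M) = p := by
  ext y
  refine ⟨?_, fun hy => ⟨e.symm ⟨y, hy⟩, (e.symm _).2,
    by simp [extendOfIsCompl_apply_of_mem_left h e (e.symm _).2]⟩⟩
  rintro ⟨x, hx, rfl⟩
  exact (extendOfIsCompl_apply_of_mem_left h e hx).symm ▸ (e ⟨x, hx⟩).2

end Submodule

section Family

variable {R M ι : Type*} [Ring R] [AddCommGroup M] [Module R M] {W : ι → Submodule R M}

lemma iSupIndep.isCompl_iSup_ne (hind : iSupIndep W) (hsup : iSup W = ⊤) (i : ι) :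
    IsCompl (W i) (⨆ (k) (_ : k ≠ i), W k) :=
  ⟨hind i, codisjoint_iff.mpr (by rw [← iSup_split_single, hsup])⟩

lemma iSupIndep.iInf_iSup_ne_eq_bot (hind : iSupIndep W) (hsup : iSup W = ⊤) :
    ⨅ j, ⨆ (k) (_ : k ≠ j), W k = ⊥ := by
  classical
  refine eq_bot_iff.mpr fun x hx => ?_
  set e := hind.linearEquiv hsup
  suffices e.symm x = 0 by simpa using congrArg e this
  ext j : 1
  obtain ⟨f, hf⟩ := (mem_biSup_iff_exists_dfinsupp _ W x).mp (mem_iInf _ |>.mp hx j)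
  have : e.symm x = f.filter (· ≠ j) := e.symm_apply_eq.mpr hf.symm
  simp [this]

lemma iSupIndep.map_extendOfIsCompl_eq (hind : iSupIndep W) (hsup : iSup W = ⊤) (i : ι)
    (e : W i ≃ₗ[R] W i) (k : ι) :
    (W k).map (extendOfIsCompl (hind.isCompl_iSup_ne hsup i) e : M →ₗ[R] M) = W k := by
  rcases eq_or_ne k i with rfl | hk
  · exact map_extendOfIsCompl_left _ e
  · have hfix : ∀ x ∈ W k, extendOfIsCompl (hind.isCompl_iSup_ne hsup i) e x = x :=
      fun x hx => extendOfIsCompl_apply_of_mem_right _ e (le_iSup₂ (f := fun k _ => W k) k hk hx)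
    ext y
    exact ⟨by rintro ⟨x, hx, rfl⟩; simpa [hfix x hx], fun hy => ⟨y, hy, hfix y hy⟩⟩

end Family

section Pair

variable {R M : Type*} [CommRing R] [AddCommGroup M] [Module R M] {A B p q : Submodule R M}

lemma mem_of_extendOfIsCompl_neg_apply_eq_neg (hAB : IsCompl A B) (h2 : IsSMulRegular M (2 : R))
    {y : M} (hy : extendOfIsCompl hAB (.neg R) y = -y) : y ∈ A := by
  obtain ⟨a, ha, b, hb, rfl⟩ := mem_sup.mp (hAB.sup_eq_top ▸ mem_top : y ∈ A ⊔ B)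
  rw [map_add, extendOfIsCompl_apply_of_mem_left hAB _ ha,
    extendOfIsCompl_apply_of_mem_right hAB _ hb, LinearEquiv.neg_apply,
    NegMemClass.coe_neg] at hy
  have hb0 : b = 0 := h2 (by simp only [smul_zero]; linear_combination (norm := module) hy)
  simpa [hb0] using ha

lemma le_inf_sup_inf_of_map_extendOfIsCompl_neg_le (hAB : IsCompl A B) (hpq : IsCompl p q)
    (h2 : IsSMulRegular M (2 : R))
    (hp : p.map (extendOfIsCompl hAB (.neg R) : M →ₗ[R] M) ≤ p)
    (hq : q.map (extendOfIsCompl hAB (.neg R) : M →ₗ[R] M) ≤ q) :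
    A ≤ A ⊓ p ⊔ A ⊓ q := by
  set σ := extendOfIsCompl hAB (.neg R)
  intro x hx
  obtain ⟨y, hy, z, hz, rfl⟩ := mem_sup.mp (hpq.sup_eq_top ▸ mem_top : x ∈ p ⊔ q)
  have hσy : σ y + y ∈ p := add_mem (hp (mem_map_of_mem hy)) hy
  have hσz : σ z + z ∈ q := add_mem (hq (mem_map_of_mem hz)) hz
  have hsum : (σ y + y) + (σ z + z) = 0 := by
    have : σ (y + z) = -(y + z) := by simp [σ, extendOfIsCompl_apply_of_mem_left hAB _ hx]
    rw [map_add] at this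
    linear_combination (norm := module) this
  have hy' : σ y + y = 0 := disjoint_def.mp hpq.disjoint _ hσy
    (by rw [eq_neg_of_add_eq_zero_left hsum]; exact neg_mem hσz)
  have hz' : σ z + z = 0 := by rwa [hy', zero_add] at hsum
  exact mem_sup.mpr ⟨y, ⟨mem_of_extendOfIsCompl_neg_apply_eq_neg hAB h2
    (eq_neg_of_add_eq_zero_left hy'), hy⟩, z, ⟨mem_of_extendOfIsCompl_neg_apply_eq_neg hAB h2
    (eq_neg_of_add_eq_zero_left hz'), hz⟩, rfl⟩

variable [IsDomain R] [IsTorsionFree R M] [Projective R M]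

lemma inf_eq_bot_or_inf_eq_bot_of_map_extendOfIsCompl_le (hAB : IsCompl A B) (hpq : IsCompl p q)
    (hp : ∀ e : A ≃ₗ[R] A, p.map (extendOfIsCompl hAB e : M →ₗ[R] M) ≤ p) :
    A ⊓ p = ⊥ ∨ A ⊓ q = ⊥ := by
  by_contra! h
  obtain ⟨a, ⟨haA, hap⟩, ha0⟩ := (Submodule.ne_bot_iff _).mp h.1
  obtain ⟨b, ⟨hbA, hbq⟩, hb0⟩ := (Submodule.ne_bot_iff _).mp h.2
  obtain ⟨c, hca⟩ := Projective.exists_dual_ne_zero R ha0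
  set f : Dual R A := c ∘ₗ p.projection q hpq ∘ₗ A.subtype
  have hfb : f ⟨b, hbA⟩ = 0 := by simp [f, projection_apply_of_mem_right hpq hbq]
  have hfa : f ⟨a, haA⟩ = c a := by simp [f, projection_apply_of_mem_left hpq hap]
  have hmem : a + c a • b ∈ p := by
    simpa [extendOfIsCompl_apply_of_mem_left hAB _ haA, LinearMap.transvection.apply, hfa]
      using hp (LinearEquiv.transvection hfb) (mem_map_of_mem hap)
  have : c a • b = 0 := disjoint_def.mp hpq.disjoint _
    (by simpa using sub_mem hmem hap) (smul_mem _ _ hbq)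
  exact (smul_eq_zero.mp this).elim hca hb0

lemma le_or_le_of_map_extendOfIsCompl_le (hAB : IsCompl A B) (hpq : IsCompl p q)
    (h2 : (2 : R) ≠ 0)
    (hp : ∀ e : A ≃ₗ[R] A, p.map (extendOfIsCompl hAB e : M →ₗ[R] M) ≤ p)
    (hq : ∀ e : A ≃ₗ[R] A, q.map (extendOfIsCompl hAB e : M →ₗ[R] M) ≤ q) :
    A ≤ p ∨ A ≤ q := by
  have hA := le_inf_sup_inf_of_map_extendOfIsCompl_neg_le hAB hpq (.of_ne_zero h2) (hp _) (hq _)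
  refine (inf_eq_bot_or_inf_eq_bot_of_map_extendOfIsCompl_le hAB hpq hp).symm.imp
    (fun h => ?_) (fun h => ?_)
  · rw [h, sup_bot_eq] at hA
    exact hA.trans inf_le_right
  · rw [h, bot_sup_eq] at hA
    exact hA.trans inf_le_right

end Pair

section Refinement

variable {R M I J : Type*} [CommRing R] [AddCommGroup M] [Module R M]
  {W : I → Submodule R M} {W' : J → Submodule R M}

lemma iSupIndep.eq_iSup_of_le_comp (hW'ind : iSupIndep W') (hWsup : iSup W = ⊤) {σ : I → J}
    (hσ : ∀ i, W i ≤ W' (σ i)) (j : J) : W' j = ⨆ (i) (_ : σ i = j), W i := by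
  set V : J → Submodule R M := fun j => ⨆ (i) (_ : σ i = j), W i
  have hVle : V ≤ W' := fun j => iSup₂_le fun i hi => hi ▸ hσ i
  have hVsup : iSup V = ⊤ := by
    rw [← hWsup, iSup_comm]
    exact iSup_congr fun i => iSup_iSup_eq_right
  exact (congrFun ((hW'ind.le_iff_eq_of_iSup_eq_top hVsup).mp hVle) j).symm

theorem exists_le_of_forall_map_le [IsDomain R] [IsTorsionFree R M] [Projective R M]
    [Nonempty J] (h2 : (2 : R) ≠ 0) (hWind : iSupIndep W) (hWsup : iSup W = ⊤)
    (hW'ind : iSupIndep W') (hW'sup : iSup W' = ⊤)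
    (hfix : ∀ φ : M ≃ₗ[R] M, (∀ i, (W i).map (φ : M →ₗ[R] M) = W i) →
      ∀ j, (W' j).map (φ : M →ₗ[R] M) ≤ W' j) (i : I) :
    ∃ j, W i ≤ W' j := by
  by_contra! h
  have hWi := hWind.isCompl_iSup_ne hWsup i
  have hfix' (e : W i ≃ₗ[R] W i) (j : J) :
      (W' j).map (extendOfIsCompl hWi e : M →ₗ[R] M) ≤ W' j :=
    hfix _ (hWind.map_extendOfIsCompl_eq hWsup i e) j
  have hle (j : J) : W i ≤ ⨆ (k) (_ : k ≠ j), W' k := by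
    refine (le_or_le_of_map_extendOfIsCompl_le hWi (hW'ind.isCompl_iSup_ne hW'sup j) h2
      (hfix' · j) fun e => ?_).resolve_left (h j)
    simpa only [Submodule.map_iSup] using iSup₂_mono fun k _ => hfix' e k
  have hbot : W i = ⊥ :=
    eq_bot_iff.mpr <| (le_iInf hle).trans (hW'ind.iInf_iSup_ne_eq_bot hW'sup).le
  exact h (Classical.arbitrary J) (hbot ▸ bot_le)

end Refinement

theorem fixed_decomposition_iff_refines_general
    {R : Type*} [CommRing R] [IsDomain R] (h2 : (2 : R) ≠ 0)
    {n : ℕ} {I J : Type*}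
    (W : I → Submodule R (Fin n → R)) (W' : J → Submodule R (Fin n → R))
    (hWind : iSupIndep W) (hWsup : iSup W = ⊤)
    (hW'ind : iSupIndep W') (hW'sup : iSup W' = ⊤)
    (hW'two : ∃ j j', j ≠ j' ∧ W' j ≠ ⊥ ∧ W' j' ≠ ⊥) :
    (∀ φ : (Fin n → R) ≃ₗ[R] (Fin n → R),
        (∀ i, (W i).map (φ : (Fin n → R) →ₗ[R] (Fin n → R)) = W i) →
        ∀ j, (W' j).map (φ : (Fin n → R) →ₗ[R] (Fin n → R)) ≤ W' j) ↔
      ∀ i, ∃ j, W i ≤ W' j := by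
  obtain ⟨j, -⟩ := hW'two
  have : Nonempty J := ⟨j⟩
  refine ⟨exists_le_of_forall_map_le h2 hWind hWsup hW'ind hW'sup, fun href φ hφ j => ?_⟩
  choose σ hσ using href
  rw [hW'ind.eq_iSup_of_le_comp hWsup hσ j]
  simp only [Submodule.map_iSup, hφ, le_refl]

/-- (Arone–Lesh) Let `R` be an integral domain with `2 ≠ 0` and let
`Rⁿ = ⊕ᵢ Wᵢ` and `Rⁿ = ⊕ⱼ W'ⱼ` be two direct sum decompositions into free
submodules, each with at least two nonzero summands. Then every automorphism
preserving all the `Wᵢ` maps each `W'ⱼ` into itself iff the decomposition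
`⊕ᵢ Wᵢ` refines `⊕ⱼ W'ⱼ`. -/
theorem fixed_decomposition_iff_refines
    {R : Type*} [CommRing R] [IsDomain R] (h2 : (2 : R) ≠ 0)
    {n : ℕ} {I J : Type*} [Fintype I] [Fintype J]
    (W : I → Submodule R (Fin n → R)) (W' : J → Submodule R (Fin n → R))
    (hWfree : ∀ i, Module.Free R (W i)) (hW'free : ∀ j, Module.Free R (W' j))
    (hWind : iSupIndep W) (hWsup : iSup W = ⊤)
    (hW'ind : iSupIndep W') (hW'sup : iSup W' = ⊤)
    (hWtwo : ∃ i i', i ≠ i' ∧ W i ≠ ⊥ ∧ W i' ≠ ⊥)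
    (hW'two : ∃ j j', j ≠ j' ∧ W' j ≠ ⊥ ∧ W' j' ≠ ⊥) :
    (∀ φ : (Fin n → R) ≃ₗ[R] (Fin n → R),
        (∀ i, (W i).map (φ : (Fin n → R) →ₗ[R] (Fin n → R)) = W i) →
        ∀ j, (W' j).map (φ : (Fin n → R) →ₗ[R] (Fin n → R)) ≤ W' j) ↔
      ∀ i, ∃ j, W i ≤ W' j :=
  fixed_decomposition_iff_refines_general h2 W W' hWind hWsup hW'ind hW'sup hW'two
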